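/- Conversely, if E : ℝⁿ → ℝ is C¹ with global minimizer β and every gradient-flow trajectory X of E satisfies E(X_t) - E(β) ≤ e^{-2ρt}(E(X_0) - E(β)) for all t ≥ 0, then E(x) - E(β) ≤ |∇E(x)|²/(2ρ) for all x (differentiate the decay estimate at t = 0). -/

import Mathlib

open Real Filter Set Topology

/-!
Along a gradient flow, `d/dt E(X t) = -‖∇E(X t)‖²`. The decay estimate bounds `t ↦ E(X t)`
from above by `e^{-2ρt}(E x - E β) + E β` on `t ≥ 0`, with equality at `t = 0`, so the right
derivatives at `0` compare: `-‖∇E x‖² ≤ -2ρ(E x - E β)`.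
-/
theorem HasDerivWithinAt.le_of_eventuallyLE_of_eq {f g : ℝ → ℝ} {f' g' x : ℝ}
    (hf : HasDerivWithinAt f f' (Ioi x) x) (hg : HasDerivWithinAt g g' (Ioi x) x)
    (hfg : f ≤ᶠ[𝓝[>] x] g) (hx : f x = g x) : f' ≤ g' := by
  rw [hasDerivWithinAt_iff_tendsto_slope' (s := Ioi x) (lt_irrefl x)] at hf hg
  refine le_of_tendsto_of_tendsto hf hg ?_
  filter_upwards [hfg, self_mem_nhdsWithin] with t hft (ht : x < t)
  simp only [slope_def_field, hx]
  gcongr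

theorem hasDerivAt_comp_of_hasDerivAt_neg_gradient {F : Type*} [NormedAddCommGroup F]
    [InnerProductSpace ℝ F] [CompleteSpace F] {E : F → ℝ} {X : ℝ → F} {t : ℝ}
    (hE : DifferentiableAt ℝ E (X t)) (hX : HasDerivAt X (-gradient E (X t)) t) :
    HasDerivAt (fun s => E (X s)) (-‖gradient E (X t)‖ ^ 2) t := by
  refine (hE.hasGradientAt.hasFDerivAt.comp_hasDerivAt t hX).congr_deriv ?_
  rw [InnerProductSpace.toDual_apply_apply, inner_neg_right, real_inner_self_eq_norm_sq]

theorem entropy_production_inequality_of_exponential_convergence_general {n : ℕ}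
    (E : EuclideanSpace ℝ (Fin n) → ℝ) (hE : ContDiff ℝ 1 E)
    (ρ : ℝ) (hρ : 0 < ρ)
    (β : EuclideanSpace ℝ (Fin n))
    (hflow : ∀ x : EuclideanSpace ℝ (Fin n),
      ∃ X : ℝ → EuclideanSpace ℝ (Fin n), X 0 = x ∧
        (∀ t : ℝ, 0 ≤ t → HasDerivAt X (-(gradient E (X t))) t) ∧
        (∀ t : ℝ, 0 ≤ t →
          E (X t) - E β ≤ Real.exp (-2 * ρ * t) * (E (X 0) - E β))) :
    ∀ x, E x - E β ≤ ‖gradient E x‖ ^ 2 / (2 * ρ) := by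
  intro x
  obtain ⟨X, hX0, hXflow, hXdecay⟩ := hflow x
  have hEX : HasDerivAt (fun t => E (X t)) (-‖gradient E x‖ ^ 2) 0 := by
    have h := hasDerivAt_comp_of_hasDerivAt_neg_gradient
      (hE.differentiable one_ne_zero (X 0)) (hXflow 0 le_rfl)
    rwa [hX0] at h
  have hbound : HasDerivAt (fun t => exp (-2 * ρ * t) * (E x - E β) + E β)
      (-2 * ρ * (E x - E β)) 0 := by
    simpa using (((hasDerivAt_id (0 : ℝ)).const_mul (-2 * ρ)).exp.mul_const
      (E x - E β)).add_const (E β)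
  have hslope : -‖gradient E x‖ ^ 2 ≤ -2 * ρ * (E x - E β) := by
    refine hEX.hasDerivWithinAt.le_of_eventuallyLE_of_eq hbound.hasDerivWithinAt ?_
      (by simp [hX0])
    filter_upwards [self_mem_nhdsWithin] with t (ht : 0 < t)
    linarith [hX0 ▸ hXdecay t ht.le]
  rw [le_div_iff₀ (by positivity)]
  linarith

/-- Converse implication: if `E : ℝⁿ → ℝ` is `C¹` with global minimizer `β`
and through every point `x` there is a gradient-flow trajectory of `E`
satisfying the exponential decay `E(X_t) - E(β) ≤ e^{-2ρt}(E(X_0) - E(β))`,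
then the entropy–production inequality `E(x) - E(β) ≤ |∇E(x)|²/(2ρ)` holds
for all `x`. -/
theorem entropy_production_inequality_of_exponential_convergence {n : ℕ}
    (E : EuclideanSpace ℝ (Fin n) → ℝ) (hE : ContDiff ℝ 1 E)
    (ρ : ℝ) (hρ : 0 < ρ)
    (β : EuclideanSpace ℝ (Fin n)) (hβ : ∀ x, E β ≤ E x)
    (hflow : ∀ x : EuclideanSpace ℝ (Fin n),
      ∃ X : ℝ → EuclideanSpace ℝ (Fin n), X 0 = x ∧
        (∀ t : ℝ, 0 ≤ t → HasDerivAt X (-(gradient E (X t))) t) ∧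
        (∀ t : ℝ, 0 ≤ t →
          E (X t) - E β ≤ Real.exp (-2 * ρ * t) * (E (X 0) - E β))) :
    ∀ x, E x - E β ≤ ‖gradient E x‖ ^ 2 / (2 * ρ) :=
  entropy_production_inequality_of_exponential_convergence_general E hE ρ hρ β hflow
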